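/- arXiv:1905.04689 — 7 statements merged into one kernel-verified Lean document; each statement's English description precedes it below -/
import Mathlib

section
/- If the parthood relation ⊑ on S is reflexive, transitive and separative, then mereological sums and fusions coincide: for all a ∈ S and B ⊆ S, Σ a B holds if and only if 𝔉 a B holds. -/
/-- Overlap: `x` and `y` overlap iff some `z` is part of both. -/
def Overlap {α : Type*} (P : α → α → Prop) (x y : α) : Prop :=
  ∃ z, P z x ∧ P z y

/-- `a` is a mereological sum of `B`. -/
def MSum {α : Type*} (P : α → α → Prop) (a : α) (B : Set α) : Prop :=
  (∀ x ∈ B, P x a) ∧ (∀ z, P z a → ∃ x ∈ B, Overlap P z x)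

/-- `a` is a mereological fusion of `B`. -/
def MFusion {α : Type*} (P : α → α → Prop) (a : α) (B : Set α) : Prop :=
  ∀ z, Overlap P z a ↔ ∃ x ∈ B, Overlap P z x

/-- Separativity (strong supplementation). -/
def Separative {α : Type*} (P : α → α → Prop) : Prop :=
  ∀ a b, ¬ P a b → ∃ z, P z a ∧ ¬ Overlap P z b

/-! Sums are fusions by transitivity alone: every overlap with `a` passes through a part of `a`,
which overlaps a member of `B`. Conversely, in a fusion every part of a member `x ∈ B` overlaps `a`,
and separativity turns this into `x ⊑ a`. -/

section

variable {α : Type*} {P : α → α → Prop}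

theorem Overlap.of_part_left (htrans : ∀ x y z, P x y → P y z → P x z) {z w x : α}
    (hzw : P z w) (h : Overlap P z x) : Overlap P w x :=
  let ⟨u, huz, hux⟩ := h
  ⟨u, htrans u z w huz hzw, hux⟩

theorem Overlap.of_part_right (htrans : ∀ x y z, P x y → P y z → P x z) {z x y : α}
    (hxy : P x y) (h : Overlap P z x) : Overlap P z y :=
  let ⟨u, huz, hux⟩ := h
  ⟨u, huz, htrans u x y hux hxy⟩

theorem Overlap.of_part (hrefl : ∀ x, P x x) {z x : α} (hzx : P z x) : Overlap P z x :=
  ⟨z, hrefl z, hzx⟩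

theorem Separative.part_of_forall_overlap (hsep : Separative P) {x a : α}
    (h : ∀ z, P z x → Overlap P z a) : P x a := by
  by_contra hxa
  obtain ⟨z, hzx, hza⟩ := hsep x a hxa
  exact hza (h z hzx)

theorem MSum.mfusion (htrans : ∀ x y z, P x y → P y z → P x z) {a : α} {B : Set α}
    (hsum : MSum P a B) : MFusion P a B := by
  intro z
  constructor
  · rintro ⟨w, hwz, hwa⟩
    obtain ⟨x, hxB, hwx⟩ := hsum.2 w hwa
    exact ⟨x, hxB, hwx.of_part_left htrans hwz⟩
  · rintro ⟨x, hxB, hzx⟩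
    exact hzx.of_part_right htrans (hsum.1 x hxB)

theorem MFusion.msum (hrefl : ∀ x, P x x) (hsep : Separative P) {a : α} {B : Set α}
    (hfus : MFusion P a B) : MSum P a B :=
  ⟨fun x hxB => hsep.part_of_forall_overlap fun z hzx =>
      (hfus z).2 ⟨x, hxB, Overlap.of_part hrefl hzx⟩,
    fun z hza => (hfus z).1 (Overlap.of_part hrefl hza)⟩

end

theorem sum_iff_fusion {α : Type*} (P : α → α → Prop)
    (hrefl : ∀ x, P x x) (htrans : ∀ x y z, P x y → P y z → P x z)
    (hsep : Separative P) :
    ∀ (a : α) (B : Set α), MSum P a B ↔ MFusion P a B :=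
  fun _ _ => ⟨MSum.mfusion htrans, MFusion.msum hrefl hsep⟩
end

section
/- The rough contact relation Ɽ_a is not transitive in general: for X = {1,2,3,4} with granulation 𝒢 = {{1,2},{3,4}}, and A = {1}, B = {2,4}, C = {3}, one has Ɽ_a A B and Ɽ_a B C but not Ɽ_a A C. -/
/-! `Ra G A B` just says that some granule meets both `A` and `B`. The set `{2, 4}` meets both
granules, whereas `1` and `3` lie in different ones. -/

/-- Type-a rough contact: nonempty parts of `A` and `B` lie in a common granule. -/
def Ra {X : Type*} (G : Set (Set X)) (A B : Set X) : Prop :=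
  ∃ e f : Set X, e.Nonempty ∧ f.Nonempty ∧ e ⊆ A ∧ f ⊆ B ∧ ∃ g ∈ G, e ⊆ g ∧ f ⊆ g

theorem ra_iff_exists_inter_nonempty {X : Type*} {G : Set (Set X)} {A B : Set X} :
    Ra G A B ↔ ∃ g ∈ G, (A ∩ g).Nonempty ∧ (B ∩ g).Nonempty := by
  constructor
  · rintro ⟨e, f, ⟨x, hx⟩, ⟨y, hy⟩, heA, hfB, g, hg, heg, hfg⟩
    exact ⟨g, hg, ⟨x, heA hx, heg hx⟩, ⟨y, hfB hy, hfg hy⟩⟩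
  · rintro ⟨g, hg, hA, hB⟩
    exact ⟨A ∩ g, B ∩ g, hA, hB, Set.inter_subset_left, Set.inter_subset_left, g, hg,
      Set.inter_subset_right, Set.inter_subset_right⟩

theorem Ra_not_transitive :
    Ra ({{1, 2}, {3, 4}} : Set (Set ℕ)) {1} {2, 4} ∧
    Ra ({{1, 2}, {3, 4}} : Set (Set ℕ)) {2, 4} {3} ∧
    ¬ Ra ({{1, 2}, {3, 4}} : Set (Set ℕ)) {1} {3} := by
  simp only [ra_iff_exists_inter_nonempty]
  refine ⟨⟨{1, 2}, by simp, ⟨1, by simp⟩, ⟨2, by simp⟩⟩,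
    ⟨{3, 4}, by simp, ⟨4, by simp⟩, ⟨3, by simp⟩⟩, ?_⟩
  rintro ⟨g, hg, ⟨x, hx1, hxg⟩, ⟨y, hy3, hyg⟩⟩
  rcases hg with rfl | rfl <;> simp_all
end

section
/- If the granulation 𝒢 covers X, i.e. ⋃𝒢 = X, then the rough contact relation Ɽ_3 is reflexive on nonempty subsets: Ɽ_3 A A holds for every nonempty A ⊆ X. -/
/-- Upper approximation: union of granules meeting `A`. -/
def upperApprox {X : Type*} (G : Set (Set X)) (A : Set X) : Set X :=
  ⋃₀ {g ∈ G | (g ∩ A).Nonempty}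

/-- Type-3 rough contact. -/
def R3 {X : Type*} (G : Set (Set X)) (A B : Set X) : Prop :=
  ∃ g ∈ G, g ⊆ upperApprox G A ∧ g ⊆ upperApprox G B

section RoughContact

variable {X : Type*} {G : Set (Set X)} {g : Set X} {A B : Set X}

theorem subset_upperApprox (hg : g ∈ G) (hgA : (g ∩ A).Nonempty) : g ⊆ upperApprox G A :=
  Set.subset_sUnion_of_mem ⟨hg, hgA⟩

theorem R3_of_inter_nonempty (hg : g ∈ G) (hgA : (g ∩ A).Nonempty) (hgB : (g ∩ B).Nonempty) :
    R3 G A B :=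
  ⟨g, hg, subset_upperApprox hg hgA, subset_upperApprox hg hgB⟩

end RoughContact

theorem R3_reflexive_of_cover_general {X : Type*} (G : Set (Set X))
    (hcov : ⋃₀ G = Set.univ) :
    ∀ A : Set X, A.Nonempty → R3 G A A := by
  rintro A ⟨a, ha⟩
  obtain ⟨g, hg, hag⟩ : a ∈ ⋃₀ G := hcov ▸ Set.mem_univ a
  exact R3_of_inter_nonempty hg ⟨a, hag, ha⟩ ⟨a, hag, ha⟩

theorem R3_reflexive_of_cover {X : Type*} (G : Set (Set X))
    (hG : ∀ g ∈ G, Set.Nonempty g) (hcov : ⋃₀ G = Set.univ) :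
    ∀ A : Set X, A.Nonempty → R3 G A A :=
  R3_reflexive_of_cover_general G hcov
end

section
/- If the granulation 𝒢 covers X, i.e. ⋃𝒢 = X, then Ɽ_a is a contact relation on the subsets of X: it satisfies the contact axioms C1, C2, C3, C4 and C5. -/
/-- `C` is a contact relation on subsets of `X` (axioms C1–C5). -/
def ContactRel {X : Type*} (C : Set X → Set X → Prop) : Prop :=
  (∀ A B : Set X, C A B → A.Nonempty ∧ B.Nonempty) ∧
  (∀ A B : Set X, C A B → C B A) ∧
  (∀ A B E : Set X, C A B → B ⊆ E → C A E) ∧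
  (∀ A B E : Set X, C A (B ∪ E) → C A B ∨ C A E) ∧
  (∀ A B : Set X, (A ∩ B).Nonempty → C A B)

/-! Shrinking the witnesses `e`, `f` to single points shows that `Ra G A B` only asks for a
granule meeting both `A` and `B`; all five axioms are immediate from that form, C5 using that
every point lies in some granule. -/

namespace Ra

variable {X : Type*} {G : Set (Set X)} {A B E : Set X}

theorem iff_exists_inter_nonempty :
    Ra G A B ↔ ∃ g ∈ G, (A ∩ g).Nonempty ∧ (B ∩ g).Nonempty := by
  constructor
  · rintro ⟨e, f, ⟨x, hx⟩, ⟨y, hy⟩, heA, hfB, g, hg, heg, hfg⟩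
    exact ⟨g, hg, ⟨x, heA hx, heg hx⟩, ⟨y, hfB hy, hfg hy⟩⟩
  · rintro ⟨g, hg, ⟨x, hxA, hxg⟩, ⟨y, hyB, hyg⟩⟩
    exact ⟨{x}, {y}, Set.singleton_nonempty x, Set.singleton_nonempty y,
      Set.singleton_subset_iff.2 hxA, Set.singleton_subset_iff.2 hyB,
      g, hg, Set.singleton_subset_iff.2 hxg, Set.singleton_subset_iff.2 hyg⟩

theorem symm (h : Ra G A B) : Ra G B A := by
  obtain ⟨g, hg, hA, hB⟩ := iff_exists_inter_nonempty.1 h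
  exact iff_exists_inter_nonempty.2 ⟨g, hg, hB, hA⟩

theorem nonempty_left (h : Ra G A B) : A.Nonempty := by
  obtain ⟨_, _, hA, -⟩ := iff_exists_inter_nonempty.1 h
  exact hA.mono Set.inter_subset_left

theorem mono_right (h : Ra G A B) (hBE : B ⊆ E) : Ra G A E := by
  obtain ⟨g, hg, hA, hB⟩ := iff_exists_inter_nonempty.1 h
  exact iff_exists_inter_nonempty.2 ⟨g, hg, hA, hB.mono (Set.inter_subset_inter_left g hBE)⟩

theorem of_union_right (h : Ra G A (B ∪ E)) : Ra G A B ∨ Ra G A E := by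
  obtain ⟨g, hg, hA, hBE⟩ := iff_exists_inter_nonempty.1 h
  rw [Set.union_inter_distrib_right, Set.union_nonempty] at hBE
  exact hBE.imp (fun hB => iff_exists_inter_nonempty.2 ⟨g, hg, hA, hB⟩)
    (fun hE => iff_exists_inter_nonempty.2 ⟨g, hg, hA, hE⟩)

theorem of_inter_nonempty (hcov : ⋃₀ G = Set.univ) (hAB : (A ∩ B).Nonempty) : Ra G A B := by
  obtain ⟨x, hxA, hxB⟩ := hAB
  obtain ⟨g, hg, hxg⟩ := Set.mem_sUnion.1 (hcov ▸ Set.mem_univ x)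
  exact iff_exists_inter_nonempty.2 ⟨g, hg, ⟨x, hxA, hxg⟩, ⟨x, hxB, hxg⟩⟩

end Ra

theorem Ra_contact_of_cover_general {X : Type*} (G : Set (Set X))
    (hcov : ⋃₀ G = Set.univ) :
    ContactRel (Ra G) :=
  ⟨fun _ _ h => ⟨h.nonempty_left, h.symm.nonempty_left⟩,
    fun _ _ h => h.symm,
    fun _ _ _ h hBE => h.mono_right hBE,
    fun _ _ _ h => h.of_union_right,
    fun _ _ hAB => Ra.of_inter_nonempty hcov hAB⟩

theorem Ra_contact_of_cover {X : Type*} (G : Set (Set X))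
    (hG : ∀ g ∈ G, Set.Nonempty g) (hcov : ⋃₀ G = Set.univ) :
    ContactRel (Ra G) :=
  Ra_contact_of_cover_general G hcov
end

section
/- The rough contact relation Ɽ_o fails the contact axioms C4 and C5 even in the classical rough set context: for X = {1,2,3} with the partition granulation 𝒢 = {{1,2,3}}, and A = {1,2,3}, B = {1,2}, C = {3}, one has Ɽ_o A (B ∪ C) but neither Ɽ_o A B nor Ɽ_o A C (refuting C4), and A ∩ B ≠ ∅ while Ɽ_o A B fails (refuting C5). -/
/-- Type-o rough contact: `A` and `B` share a granule. -/
def Ro {X : Type*} (G : Set (Set X)) (A B : Set X) : Prop :=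
  ∃ g ∈ G, g ⊆ A ∧ g ⊆ B

theorem ro_singleton_iff {X : Type*} {g A B : Set X} : Ro {g} A B ↔ g ⊆ A ∧ g ⊆ B := by
  simp [Ro]

theorem Ro_fails_C4_C5 :
    Ro ({{1, 2, 3}} : Set (Set ℕ)) {1, 2, 3} ({1, 2} ∪ {3}) ∧
    ¬ Ro ({{1, 2, 3}} : Set (Set ℕ)) {1, 2, 3} {1, 2} ∧
    ¬ Ro ({{1, 2, 3}} : Set (Set ℕ)) {1, 2, 3} {3} ∧
    (({1, 2, 3} : Set ℕ) ∩ {1, 2}).Nonempty := by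
  rw [Set.insert_union, Set.singleton_union]
  simp only [ro_singleton_iff, subset_rfl, true_and]
  refine ⟨fun h => ?_, fun h => ?_, ⟨1, by simp⟩⟩
  · simpa using h (show 3 ∈ ({1, 2, 3} : Set ℕ) by simp)
  · simpa using h (show 1 ∈ ({1, 2, 3} : Set ℕ) by simp)
end

section
/- The rough contact relation Ɽ_2 satisfies the contact axioms C1, C2 and C3: Ɽ_2 A B implies A ≠ ∅ and B ≠ ∅; Ɽ_2 A B implies Ɽ_2 B A; and Ɽ_2 A B together with B ⊆ E implies Ɽ_2 A E. -/
/-- Lower approximation: union of granules included in `A`. -/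
def lowerApprox {X : Type*} (G : Set (Set X)) (A : Set X) : Set X :=
  ⋃₀ {g ∈ G | g ⊆ A}

/-- Type-2 rough contact. -/
def R2 {X : Type*} (G : Set (Set X)) (A B : Set X) : Prop :=
  ∃ e ∈ G, ∃ f ∈ G, e ⊆ lowerApprox G A ∧ e ⊆ upperApprox G B ∧
    f ⊆ upperApprox G A ∧ f ⊆ lowerApprox G B

section Approximations

variable {X : Type*} (G : Set (Set X)) {A B : Set X}

lemma lowerApprox_subset (A : Set X) : lowerApprox G A ⊆ A :=
  Set.sUnion_subset fun _ hg => hg.2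

lemma lowerApprox_mono (h : A ⊆ B) : lowerApprox G A ⊆ lowerApprox G B :=
  Set.sUnion_mono fun _ hg => ⟨hg.1, hg.2.trans h⟩

lemma upperApprox_mono (h : A ⊆ B) : upperApprox G A ⊆ upperApprox G B :=
  Set.sUnion_mono fun _ hg => ⟨hg.1, hg.2.mono (Set.inter_subset_inter_right _ h)⟩

end Approximations

namespace R2

variable {X : Type*} {G : Set (Set X)} {A B E : Set X}

lemma symm : R2 G A B → R2 G B A
  | ⟨e, heG, f, hfG, heA, heB, hfA, hfB⟩ => ⟨f, hfG, e, heG, hfB, hfA, heB, heA⟩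

lemma mono_right (h : R2 G A B) (hBE : B ⊆ E) : R2 G A E := by
  obtain ⟨e, heG, f, hfG, heA, heB, hfA, hfB⟩ := h
  exact ⟨e, heG, f, hfG, heA, heB.trans (upperApprox_mono G hBE), hfA,
    hfB.trans (lowerApprox_mono G hBE)⟩

lemma nonempty_left (hG : ∀ g ∈ G, g.Nonempty) (h : R2 G A B) : A.Nonempty := by
  obtain ⟨e, heG, -, -, heA, -⟩ := h
  exact (hG e heG).mono (heA.trans (lowerApprox_subset G A))

end R2

theorem R2_C1_C2_C3 {X : Type*} (G : Set (Set X))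
    (hG : ∀ g ∈ G, Set.Nonempty g) :
    (∀ A B : Set X, R2 G A B → A.Nonempty ∧ B.Nonempty) ∧
    (∀ A B : Set X, R2 G A B → R2 G B A) ∧
    (∀ A B E : Set X, R2 G A B → B ⊆ E → R2 G A E) :=
  ⟨fun _ _ h => ⟨h.nonempty_left hG, h.symm.nonempty_left hG⟩,
    fun _ _ => R2.symm, fun _ _ _ => R2.mono_right⟩
end

section
/- The rough contact relation Ɽ_3 satisfies the contact axioms C1, C2 and C3: Ɽ_3 A B implies A ≠ ∅ and B ≠ ∅; Ɽ_3 A B implies Ɽ_3 B A; and Ɽ_3 A B together with B ⊆ E implies Ɽ_3 A E. -/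
section RoughContact

variable {X : Type*} {G : Set (Set X)} {A B E : Set X}

lemma upperApprox_mono_s17 (G : Set (Set X)) : Monotone (upperApprox G) := by
  rintro A B hAB x ⟨g, ⟨hgG, y, hyg, hyA⟩, hxg⟩
  exact ⟨g, ⟨hgG, y, hyg, hAB hyA⟩, hxg⟩

lemma nonempty_of_upperApprox_nonempty (h : (upperApprox G A).Nonempty) : A.Nonempty := by
  obtain ⟨-, g, ⟨-, y, -, hyA⟩, -⟩ := h
  exact ⟨y, hyA⟩

lemma R3.symm (h : R3 G A B) : R3 G B A := by
  obtain ⟨g, hgG, hA, hB⟩ := h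
  exact ⟨g, hgG, hB, hA⟩

lemma R3.mono_right (h : R3 G A B) (hBE : B ⊆ E) : R3 G A E := by
  obtain ⟨g, hgG, hA, hB⟩ := h
  exact ⟨g, hgG, hA, hB.trans (upperApprox_mono_s17 G hBE)⟩

lemma R3.nonempty_left (hG : ∀ g ∈ G, g.Nonempty) (h : R3 G A B) : A.Nonempty := by
  obtain ⟨g, hgG, hA, -⟩ := h
  exact nonempty_of_upperApprox_nonempty ((hG g hgG).mono hA)

end RoughContact

theorem R3_C1_C2_C3 {X : Type*} (G : Set (Set X))
    (hG : ∀ g ∈ G, Set.Nonempty g) :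
    (∀ A B : Set X, R3 G A B → A.Nonempty ∧ B.Nonempty) ∧
    (∀ A B : Set X, R3 G A B → R3 G B A) ∧
    (∀ A B E : Set X, R3 G A B → B ⊆ E → R3 G A E) :=
  ⟨fun _ _ h => ⟨h.nonempty_left hG, h.symm.nonempty_left hG⟩,
    fun _ _ h => h.symm,
    fun _ _ _ h hBE => h.mono_right hBE⟩
end
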